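/- Let 0 < ε < 1/2, and let w : E → ℝ≥0 be weights on a finite set E with disjoint subsets B, S ⊆ E. Suppose ∑_{e∈B} w(e) ≥ 4ℓ, |S| ≤ 2ℓ, and w(e) ≤ 2 for all e ∈ S, where ℓ > 0. Let P be any probability distribution on E with (1-ε)·w(e)/W ≤ P(e) ≤ (1+ε)·w(e)/W for all e, where W = ∑_{e∈E} w(e) > 0. Then P(B)/(P(B)+P(S)) ≥ 1/5. -/
import Mathlib


theorem big_element_sampling_probability (α : Type*) (E B S : Finset α) (w P : α → ℝ)
    (ε ℓ : ℝ) (hε0 : 0 < ε) (hε : ε < 1 / 2) (hℓ : 0 < ℓ)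
    (hB : B ⊆ E) (hS : S ⊆ E) (hBS : Disjoint B S)
    (hnonneg : ∀ e ∈ E, 0 ≤ w e)
    (hW : 0 < ∑ e ∈ E, w e)
    (hwB : 4 * ℓ ≤ ∑ e ∈ B, w e)
    (hScard : (S.card : ℝ) ≤ 2 * ℓ)
    (hwS : ∀ e ∈ S, w e ≤ 2)
    (hPnonneg : ∀ e ∈ E, 0 ≤ P e)
    (hPsum : ∑ e ∈ E, P e = 1)
    (hPlo : ∀ e ∈ E, (1 - ε) * (w e / ∑ e' ∈ E, w e') ≤ P e)
    (hPhi : ∀ e ∈ E, P e ≤ (1 + ε) * (w e / ∑ e' ∈ E, w e')) :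
    (∑ e ∈ B, P e) / ((∑ e ∈ B, P e) + (∑ e ∈ S, P e)) ≥ 1 / 5 := by
  set W := ∑ e ∈ E, w e with hWdef
  have hPB : 2 * ℓ / W ≤ ∑ e ∈ B, P e := by
    have h1 : ∑ e ∈ B, (1 - ε) * (w e / W) ≤ ∑ e ∈ B, P e :=
      Finset.sum_le_sum fun e he => hPlo e (hB he)
    have h2 : (2 : ℝ) * ℓ / W ≤ ∑ e ∈ B, (1 - ε) * (w e / W) := by
      rw [← Finset.mul_sum, ← Finset.sum_div]
      rw [div_le_iff₀ hW]
      have : (1 - ε) * ((∑ e ∈ B, w e) / W) * W = (1 - ε) * (∑ e ∈ B, w e) := by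
        field_simp
      rw [this]
      nlinarith [hwB, hℓ]
    linarith
  have hPS : ∑ e ∈ S, P e ≤ 6 * ℓ / W := by
    have h1 : ∑ e ∈ S, P e ≤ ∑ e ∈ S, (1 + ε) * (w e / W) :=
      Finset.sum_le_sum fun e he => hPhi e (hS he)
    have hwSsum : ∑ e ∈ S, w e ≤ 4 * ℓ := by
      calc ∑ e ∈ S, w e ≤ ∑ _e ∈ S, (2 : ℝ) := Finset.sum_le_sum hwS
        _ = 2 * S.card := by rw [Finset.sum_const]; push_cast; ring
        _ ≤ 4 * ℓ := by linarith
    have h2 : ∑ e ∈ S, (1 + ε) * (w e / W) ≤ 6 * ℓ / W := by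
      rw [← Finset.mul_sum, ← Finset.sum_div]
      rw [mul_div_assoc', div_le_div_iff₀ hW hW]
      have hS0 : 0 ≤ ∑ e ∈ S, w e := Finset.sum_nonneg fun e he => hnonneg e (hS he)
      have key : (1 + ε) * ∑ e ∈ S, w e ≤ 6 * ℓ := by nlinarith
      nlinarith [mul_le_mul_of_nonneg_right key hW.le]
    linarith
  have hPBpos : 0 < ∑ e ∈ B, P e := lt_of_lt_of_le (by positivity) hPB
  have hPSnn : 0 ≤ ∑ e ∈ S, P e := Finset.sum_nonneg fun e he => hPnonneg e (hS he)
  rw [ge_iff_le, div_le_div_iff₀ (by norm_num) (by linarith)]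
  have h4 : ∑ e ∈ S, P e ≤ 4 * ∑ e ∈ B, P e := by
    have : 6 * ℓ / W ≤ 4 * (2 * ℓ / W) := by
      rw [div_le_iff₀ hW]; field_simp; nlinarith [hℓ, hW]
    linarith
  linarith
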